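/- Let m ≥ 1, let 2 ≤ s ≤ m and j ≥ 1. Then E_j ≤ Σ_{i=1}^{s−1} λ_i γ_i² + 4 C_s^{2j} · Σ_{i=s}^m λ_i γ_i². (Key intermediate inequality in the proof of Theorem 2: testing the CG optimality property with the residual polynomial of the CG process whose initial error has no components along the first s−1 eigenvectors.) -/

import Mathlib

/-!
The infimum is tested with the Chebyshev polynomial `T_j` transplanted to `[λ_s, λ_m]` by
`x ↦ (λ_m + λ_s - 2x) / (λ_m - λ_s)` and normalized to be `1` at `0`. On `[0, λ_s]` the transplanted
argument lies in `[1, x₀]`, `x₀ = (λ_m + λ_s) / (λ_m - λ_s)`, where `T_j` is increasing, so the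
polynomial is bounded by `1` there. On `[λ_s, λ_m]` it is bounded by `1 / T_j(x₀)`, and
`T_j(cosh t) = cosh (j t) ≥ e^{j t} / 2` gives `1 / T_j(x₀) ≤ 2 (x₀ - √(x₀² - 1))^j = 2 C_s^j`.
-/

open Polynomial Real

namespace Polynomial.Chebyshev

theorem eval_T_real_le_eval_T_real (n : ℕ) {x y : ℝ} (hx : 1 ≤ x) (hxy : x ≤ y) :
    (T ℝ n).eval x ≤ (T ℝ n).eval y := by
  have hy : 1 ≤ y := hx.trans hxy
  rw [← cosh_arcosh hx, ← cosh_arcosh hy, T_real_cosh, T_real_cosh, cosh_le_cosh,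
    abs_of_nonneg (by have := arcosh_nonneg hx; positivity),
    abs_of_nonneg (by have := arcosh_nonneg hy; positivity)]
  push_cast
  exact mul_le_mul_of_nonneg_left ((arcosh_le_arcosh (by linarith) (by linarith)).2 hxy) n.cast_nonneg

theorem inv_eval_T_real_le (n : ℕ) {x : ℝ} (hx : 1 ≤ x) :
    ((T ℝ n).eval x)⁻¹ ≤ 2 * (x - √(x ^ 2 - 1)) ^ n := by
  have hexp : exp (-arcosh x) = x - √(x ^ 2 - 1) := by
    rw [exp_neg, exp_arcosh hx, add_sqrt_self_sq_sub_one_inv hx]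
  set t : ℝ := n * arcosh x
  have hcosh : exp t / 2 ≤ cosh t := by rw [cosh_eq]; linarith [exp_pos (-t)]
  calc ((T ℝ n).eval x)⁻¹ = (cosh t)⁻¹ := by rw [← cosh_arcosh hx, T_real_cosh]; push_cast; rfl
    _ ≤ (exp t / 2)⁻¹ := inv_anti₀ (by positivity) hcosh
    _ = 2 * exp (-arcosh x) ^ n := by rw [← exp_nat_mul, mul_neg, exp_neg, inv_div, div_eq_mul_inv]
    _ = 2 * (x - √(x ^ 2 - 1)) ^ n := by rw [hexp]

end Polynomial.Chebyshev

theorem sub_sqrt_sq_sub_one_of_one_lt {r : ℝ} (hr : 1 < r) :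
    (r ^ 2 + 1) / (r ^ 2 - 1) - √(((r ^ 2 + 1) / (r ^ 2 - 1)) ^ 2 - 1) = (r - 1) / (r + 1) := by
  have hr2 : 0 < r ^ 2 - 1 := by nlinarith
  have hsq : ((r ^ 2 + 1) / (r ^ 2 - 1)) ^ 2 - 1 = (2 * r / (r ^ 2 - 1)) ^ 2 := by
    field_simp; ring
  rw [hsq, sqrt_sq (by positivity)]
  field_simp
  ring

noncomputable def chebyshevResidual (a b : ℝ) (n : ℕ) : ℝ[X] :=
  C ((Chebyshev.T ℝ n).eval ((b + a) / (b - a)))⁻¹ *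
    (Chebyshev.T ℝ n).comp (C ((b + a) / (b - a)) - C (2 / (b - a)) * X)

section chebyshevResidual

variable {a b : ℝ}

theorem eval_chebyshevResidual (n : ℕ) (x : ℝ) :
    (chebyshevResidual a b n).eval x = ((Chebyshev.T ℝ n).eval ((b + a) / (b - a)))⁻¹ *
      (Chebyshev.T ℝ n).eval ((b + a) / (b - a) - 2 / (b - a) * x) := by
  simp [chebyshevResidual]

theorem natDegree_chebyshevResidual_le (a b : ℝ) (n : ℕ) :
    (chebyshevResidual a b n).natDegree ≤ n := by
  have hlin : (C ((b + a) / (b - a)) - C (2 / (b - a)) * X).natDegree ≤ 1 :=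
    (natDegree_sub_le _ _).trans
      (max_le (by simp) ((natDegree_C_mul_le _ _).trans natDegree_X_le))
  refine (natDegree_C_mul_le _ _).trans (natDegree_comp_le.trans ?_)
  simpa [Chebyshev.natDegree_T] using Nat.mul_le_mul_left n hlin

theorem one_le_add_div_sub (ha : 0 ≤ a) (hab : a < b) : 1 ≤ (b + a) / (b - a) := by
  rw [one_le_div (by linarith)]; linarith

theorem eval_chebyshevResidual_zero (ha : 0 ≤ a) (hab : a < b) (n : ℕ) :
    (chebyshevResidual a b n).eval 0 = 1 := by
  have hT := Chebyshev.one_le_eval_T_real n (one_le_add_div_sub ha hab)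
  rw [eval_chebyshevResidual, mul_zero, sub_zero, inv_mul_cancel₀ (by positivity)]

theorem abs_eval_chebyshevResidual_le_one (hab : a < b) (n : ℕ) {x : ℝ}
    (hx : x ∈ Set.Icc 0 a) : |(chebyshevResidual a b n).eval x| ≤ 1 := by
  obtain ⟨hx0, hxa⟩ := hx
  set x₀ := (b + a) / (b - a) with hx₀_def
  have hu1 : 1 ≤ x₀ - 2 / (b - a) * x := by
    rw [show x₀ - 2 / (b - a) * x = (b + a - 2 * x) / (b - a) by
      rw [hx₀_def]; field_simp,
      one_le_div (by linarith)]
    linarith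
  have hux₀ : x₀ - 2 / (b - a) * x ≤ x₀ := by
    have : 0 ≤ 2 / (b - a) * x := mul_nonneg (div_nonneg zero_le_two (by linarith)) hx0
    linarith
  have hTu := Chebyshev.one_le_eval_T_real n hu1
  have hmono := Chebyshev.eval_T_real_le_eval_T_real n hu1 hux₀
  rw [eval_chebyshevResidual, abs_of_nonneg (mul_nonneg (inv_nonneg.2 (by linarith)) (by linarith)),
    inv_mul_le_one₀ (by linarith)]
  exact hmono

theorem abs_eval_chebyshevResidual_le (ha : 0 < a) (hab : a < b) (n : ℕ) {x : ℝ}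
    (hx : x ∈ Set.Icc a b) :
    |(chebyshevResidual a b n).eval x| ≤ 2 * ((√(b / a) - 1) / (√(b / a) + 1)) ^ n := by
  obtain ⟨hax, hxb⟩ := hx
  set x₀ := (b + a) / (b - a) with hx₀_def
  have hx₀ : 1 ≤ x₀ := one_le_add_div_sub ha.le hab
  have hu : |x₀ - 2 / (b - a) * x| ≤ 1 := by
    rw [show x₀ - 2 / (b - a) * x = (b + a - 2 * x) / (b - a) by
      rw [hx₀_def]; field_simp,
      abs_div, abs_of_pos (by linarith : 0 < b - a), div_le_one (by linarith), abs_le]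
    constructor <;> linarith
  have hr : 1 < √(b / a) := by rw [lt_sqrt zero_le_one, one_pow, one_lt_div ha]; exact hab
  have hx₀r : x₀ = (√(b / a) ^ 2 + 1) / (√(b / a) ^ 2 - 1) := by
    rw [hx₀_def, sq_sqrt (div_nonneg (by linarith) ha.le)]
    field_simp
  calc |(chebyshevResidual a b n).eval x|
      ≤ ((Chebyshev.T ℝ n).eval x₀)⁻¹ * 1 := by
        have hT := Chebyshev.one_le_eval_T_real n hx₀
        rw [eval_chebyshevResidual, abs_mul, abs_of_pos (by positivity)]
        exact mul_le_mul_of_nonneg_left (Chebyshev.abs_eval_T_real_le_one n hu) (by positivity)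
    _ ≤ 2 * (x₀ - √(x₀ ^ 2 - 1)) ^ n := by
        rw [mul_one]; exact_mod_cast Chebyshev.inv_eval_T_real_le n hx₀
    _ = 2 * ((√(b / a) - 1) / (√(b / a) + 1)) ^ n := by
        rw [hx₀r, sub_sqrt_sq_sub_one_of_one_lt hr]

end chebyshevResidual

theorem exists_poly_abs_le_one_and_abs_le (a b : ℝ) (ha : 0 < a) (hab : a ≤ b) (n : ℕ) :
    ∃ q : ℝ[X], q.natDegree ≤ n ∧ q.eval 0 = 1 ∧ (∀ x ∈ Set.Icc 0 a, |q.eval x| ≤ 1) ∧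
      ∀ x ∈ Set.Icc a b, |q.eval x| ≤ 2 * ((√(b / a) - 1) / (√(b / a) + 1)) ^ n := by
  rcases hab.lt_or_eq with hab | rfl
  · exact ⟨chebyshevResidual a b n, natDegree_chebyshevResidual_le a b n,
      eval_chebyshevResidual_zero ha.le hab n, fun x hx ↦ abs_eval_chebyshevResidual_le_one hab n hx,
      fun x hx ↦ abs_eval_chebyshevResidual_le ha hab n hx⟩
  · refine ⟨(1 - C a⁻¹ * X) ^ n, ?_, by simp, ?_, ?_⟩
    · have hlin : (1 - C a⁻¹ * X).natDegree ≤ 1 :=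
        (natDegree_sub_le _ _).trans (max_le (by simp) ((natDegree_C_mul_le _ _).trans natDegree_X_le))
      simpa using natDegree_pow_le.trans (Nat.mul_le_mul_left n hlin)
    · rintro x ⟨hx0, hxa⟩
      have hxa' : a⁻¹ * x ≤ 1 := by rw [inv_mul_le_one₀ ha]; exact hxa
      have : 0 ≤ a⁻¹ * x := by positivity
      simp only [eval_pow, eval_sub, eval_one, eval_mul, eval_C, eval_X, abs_pow]
      exact pow_le_one₀ (abs_nonneg _) (abs_le.2 ⟨by linarith, by linarith⟩)
    · rintro x ⟨hax, hxa⟩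
      obtain rfl := le_antisymm hxa hax
      simpa [ha.ne'] using le_mul_of_one_le_left (pow_nonneg le_rfl n) one_le_two

theorem Finset.sum_Icc_eq_sum_Icc_add_sum_Icc {M : Type*} [AddCommMonoid M] (f : ℕ → M)
    {a b c : ℕ} (hab : a ≤ b) (hb : 1 ≤ b) (hbc : b ≤ c + 1) :
    ∑ i ∈ Finset.Icc a c, f i = ∑ i ∈ Finset.Icc a (b - 1), f i + ∑ i ∈ Finset.Icc b c, f i := by
  obtain ⟨b, rfl⟩ := Nat.exists_eq_add_of_le' hb
  simp only [Nat.add_sub_cancel, ← Finset.Ico_add_one_right_eq_Icc]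
  exact (Finset.sum_Ico_consecutive f hab hbc).symm

theorem Finset.sum_mul_mul_sq_le {ι : Type*} (t : Finset ι) {w g p : ι → ℝ} {B : ℝ}
    (hw : ∀ i ∈ t, 0 ≤ w i) (hp : ∀ i ∈ t, |p i| ≤ B) :
    ∑ i ∈ t, w i * (g i * p i) ^ 2 ≤ B ^ 2 * ∑ i ∈ t, w i * g i ^ 2 := by
  rw [Finset.mul_sum]
  refine Finset.sum_le_sum fun i hi ↦ ?_
  have hpB : p i ^ 2 ≤ B ^ 2 := by
    rw [← sq_abs]; exact pow_le_pow_left₀ (abs_nonneg _) (hp i hi) 2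
  calc w i * (g i * p i) ^ 2 = w i * g i ^ 2 * p i ^ 2 := by ring
    _ ≤ w i * g i ^ 2 * B ^ 2 := mul_le_mul_of_nonneg_left hpB (by have := hw i hi; positivity)
    _ = B ^ 2 * (w i * g i ^ 2) := by ring

theorem cg_intermediate_bound_general (m : ℕ) (s : ℕ) (hs : 2 ≤ s) (hsm : s ≤ m)
    (lam gam : ℕ → ℝ)
    (hpos : ∀ i, 1 ≤ i → i ≤ m → 0 < lam i)
    (hmono : ∀ i k, 1 ≤ i → i ≤ k → k ≤ m → lam i ≤ lam k)
    (j : ℕ) :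
    sInf {y : ℝ | ∃ q : Polynomial ℝ, q.natDegree ≤ j ∧ q.eval 0 = 1 ∧
        y = ∑ i ∈ Finset.Icc 1 m, lam i * (gam i * q.eval (lam i)) ^ 2} ≤
      (∑ i ∈ Finset.Icc 1 (s - 1), lam i * gam i ^ 2) +
        4 * ((Real.sqrt (lam m / lam s) - 1) / (Real.sqrt (lam m / lam s) + 1)) ^ (2 * j) *
          ∑ i ∈ Finset.Icc s m, lam i * gam i ^ 2 := by
  have hlam_s : 0 < lam s := hpos s (by omega) hsm
  have hlow : ∀ i ∈ Finset.Icc 1 (s - 1), lam i ∈ Set.Icc 0 (lam s) := fun i hi ↦ by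
    obtain ⟨hi1, his⟩ := Finset.mem_Icc.1 hi
    exact ⟨(hpos i hi1 (by omega)).le, hmono i s hi1 (by omega) hsm⟩
  have hhigh : ∀ i ∈ Finset.Icc s m, lam i ∈ Set.Icc (lam s) (lam m) := fun i hi ↦ by
    obtain ⟨hsi, him⟩ := Finset.mem_Icc.1 hi
    exact ⟨hmono s i (by omega) hsi him, hmono i m (by omega) him le_rfl⟩
  obtain ⟨q, hdeg, hq0, hq_low, hq_high⟩ :=
    exists_poly_abs_le_one_and_abs_le (lam s) (lam m) hlam_s (hmono s m (by omega) hsm le_rfl) j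
  calc _ ≤ ∑ i ∈ Finset.Icc 1 m, lam i * (gam i * q.eval (lam i)) ^ 2 := by
        refine csInf_le ⟨0, ?_⟩ ⟨q, hdeg, hq0, rfl⟩
        rintro _ ⟨q, -, -, rfl⟩
        refine Finset.sum_nonneg fun i hi ↦ mul_nonneg ?_ (sq_nonneg _)
        exact (hpos i (Finset.mem_Icc.1 hi).1 (Finset.mem_Icc.1 hi).2).le
    _ = ∑ i ∈ Finset.Icc 1 (s - 1), lam i * (gam i * q.eval (lam i)) ^ 2 +
          ∑ i ∈ Finset.Icc s m, lam i * (gam i * q.eval (lam i)) ^ 2 :=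
        Finset.sum_Icc_eq_sum_Icc_add_sum_Icc _ (by omega) (by omega) (by omega)
    _ ≤ 1 ^ 2 * ∑ i ∈ Finset.Icc 1 (s - 1), lam i * gam i ^ 2 +
          (2 * ((√(lam m / lam s) - 1) / (√(lam m / lam s) + 1)) ^ j) ^ 2 *
            ∑ i ∈ Finset.Icc s m, lam i * gam i ^ 2 := by
        gcongr
        · exact Finset.sum_mul_mul_sq_le _ (fun i hi ↦ (hlow i hi).1)
            fun i hi ↦ hq_low _ (hlow i hi)
        · exact Finset.sum_mul_mul_sq_le _ (fun i hi ↦ hlam_s.le.trans (hhigh i hi).1)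
            fun i hi ↦ hq_high _ (hhigh i hi)
    _ = _ := by ring

/-- Key intermediate inequality in the proof of Theorem 2 of the paper:
`E_j ≤ Σ_{i=1}^{s-1} λ_i γ_i² + 4 C_s^{2j} Σ_{i=s}^m λ_i γ_i²`, where
`E j = sInf { Σ_{i=1}^m λ_i (γ_i q(λ_i))² : q polynomial, deg q ≤ j, q(0) = 1 }` and
`C_s = (√κ_s − 1)/(√κ_s + 1)` with `κ_s = λ_m / λ_s`. -/
theorem cg_intermediate_bound (m : ℕ) (hm : 1 ≤ m) (s : ℕ) (hs : 2 ≤ s) (hsm : s ≤ m)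
    (lam gam : ℕ → ℝ)
    (hpos : ∀ i, 1 ≤ i → i ≤ m → 0 < lam i)
    (hmono : ∀ i k, 1 ≤ i → i ≤ k → k ≤ m → lam i ≤ lam k)
    (j : ℕ) (hj : 1 ≤ j) :
    sInf {y : ℝ | ∃ q : Polynomial ℝ, q.natDegree ≤ j ∧ q.eval 0 = 1 ∧
        y = ∑ i ∈ Finset.Icc 1 m, lam i * (gam i * q.eval (lam i)) ^ 2} ≤
      (∑ i ∈ Finset.Icc 1 (s - 1), lam i * gam i ^ 2) +
        4 * ((Real.sqrt (lam m / lam s) - 1) / (Real.sqrt (lam m / lam s) + 1)) ^ (2 * j) *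
          ∑ i ∈ Finset.Icc s m, lam i * gam i ^ 2 :=
  cg_intermediate_bound_general m s hs hsm lam gam hpos hmono j
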